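/- Let I = {i}, O = {o}, let o′ be a fresh signal, let the specification be φ = (G(i → G i) ∧ F i) → (G(o → G o) ∧ F o ∧ G(i ∨ ¬o)), and let the fault model be δ = F(o ↔ ¬o′). Let T5 ∈ Moore(O, I) be the two-state test strategy that outputs i = false and stays in its initial state as long as it observes o = false, and upon observing o = true moves to (and stays forever in) a state outputting i = true. Then the test suite Ω = {T5} is universally complete with respect to δ: for every S′ ∈ Mealy({i},{o′}) with S′ ⊨r φ[o←o′] and every F ∈ Mealy({i,o′},{o}) with F ⊨r δ, trace(T5, S′∘F) ⊭ φ. -/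
import Mathlib


namespace TestSynth

/-- LTL formulas over atomic propositions of type `V`. -/
inductive LTL (V : Type) : Type
  | tt : LTL V
  | atom (v : V) : LTL V
  | neg (φ : LTL V) : LTL V
  | disj (φ ψ : LTL V) : LTL V
  | next (φ : LTL V) : LTL V
  | untl (φ ψ : LTL V) : LTL V

namespace LTL

/-- Satisfaction of an LTL formula on an infinite trace `σ : ℕ → V → Bool`. -/
def Sat {V : Type} : LTL V → (ℕ → V → Bool) → Prop
  | .tt, _ => True
  | .atom v, σ => σ 0 v = true
  | .neg φ, σ => ¬ Sat φ σ
  | .disj φ ψ, σ => Sat φ σ ∨ Sat ψ σ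
  | .next φ, σ => Sat φ (fun n => σ (n + 1))
  | .untl φ ψ, σ =>
      ∃ j, Sat ψ (fun n => σ (n + j)) ∧ ∀ k, k < j → Sat φ (fun n => σ (n + k))

def conj {V : Type} (φ ψ : LTL V) : LTL V := .neg (.disj (.neg φ) (.neg ψ))
def imp {V : Type} (φ ψ : LTL V) : LTL V := .disj (.neg φ) ψ
def liff {V : Type} (φ ψ : LTL V) : LTL V := conj (imp φ ψ) (imp ψ φ)
/-- `F φ` (eventually). -/
def ev {V : Type} (φ : LTL V) : LTL V := .untl .tt φ
/-- `G φ` (always). -/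
def alw {V : Type} (φ : LTL V) : LTL V := .neg (ev (.neg φ))

/-- Rename atomic propositions. -/
def rename {V W : Type} (f : V → W) : LTL V → LTL W
  | .tt => .tt
  | .atom v => .atom (f v)
  | .neg φ => .neg (rename f φ)
  | .disj φ ψ => .disj (rename f φ) (rename f ψ)
  | .next φ => .next (rename f φ)
  | .untl φ ψ => .untl (rename f φ) (rename f ψ)

/-- The atom `v` occurs in the formula. -/
def Mentions {V : Type} (v : V) : LTL V → Prop
  | .tt => False
  | .atom w => w = v
  | .neg φ => Mentions v φ
  | .disj φ ψ => Mentions v φ ∨ Mentions v ψ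
  | .next φ => Mentions v φ
  | .untl φ ψ => Mentions v φ ∨ Mentions v ψ

end LTL

/-- A Mealy machine with input letters `A` and output letters `B` (finite state set). -/
structure Mealy (A B : Type) where
  State : Type
  finState : Finite State
  init : State
  trans : State → A → State
  out : State → A → B

/-- A Moore machine with input letters `A` and output letters `B` (finite state set):
the output does not depend on the current input letter. -/
structure Moore (A B : Type) where
  State : Type
  finState : Finite State
  init : State
  trans : State → A → State
  out : State → B

/-- Joint execution of a test strategy `T` (a Moore machine producing the system's inputs,
observing the system's outputs through `obs`) with a Mealy machine `S`. -/
def exec {A B C : Type} (T : Moore C A) (S : Mealy A B) (obs : B → C) :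
    ℕ → T.State × S.State
  | 0 => (T.init, S.init)
  | n + 1 =>
      let p := exec T S obs n
      (T.trans p.1 (obs (S.out p.2 (T.out p.1))), S.trans p.2 (T.out p.1))

/-- The input/output letters produced at step `n` of the joint execution. -/
def io {A B C : Type} (T : Moore C A) (S : Mealy A B) (obs : B → C) (n : ℕ) : A × B :=
  let p := exec T S obs n
  (T.out p.1, S.out p.2 (T.out p.1))

/-- The signals: inputs `I`, outputs `O`, and one fresh signal `o_i′`. -/
abbrev Sig (I O : Type) : Type := I ⊕ (O ⊕ Unit)

/-- The fresh signal `o_i′`. -/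
def fresh (I O : Type) : Sig I O := Sum.inr (Sum.inr ())

/-- Test strategies `Moore(O, I)`. -/
abbrev Strat (I O : Type) : Type 1 := Moore (O → Bool) (I → Bool)
/-- Systems `Mealy(I, O)`. -/
abbrev SysF (I O : Type) : Type 1 := Mealy (I → Bool) (O → Bool)
/-- Systems `Mealy(I, O ∪ {o_i′})`. -/
abbrev SysE (I O : Type) : Type 1 := Mealy (I → Bool) ((O ⊕ Unit) → Bool)
/-- Strategies `Moore(O ∪ {o_i′}, I)` observing all outputs including `o_i′`. -/
abbrev StratE (I O : Type) : Type 1 := Moore ((O ⊕ Unit) → Bool) (I → Bool)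

/-- trace(T, S) for `S ∈ Mealy(I,O)` as a valuation of all signals
(the fresh signal, which does not exist in `S`, is `false`). -/
def trF {I O : Type} (T : Strat I O) (S : SysF I O) : ℕ → Sig I O → Bool :=
  fun n v =>
    match v with
    | Sum.inl i => (io T S id n).1 i
    | Sum.inr (Sum.inl o) => (io T S id n).2 o
    | Sum.inr (Sum.inr _) => false

/-- Observation of the outputs `O` only (hiding `o_i′`). -/
def obsO {O : Type} (y : (O ⊕ Unit) → Bool) : O → Bool := fun o => y (Sum.inl o)

/-- trace(T, S) for `S ∈ Mealy(I, O ∪ {o_i′})` and `T ∈ Moore(O, I)` observing only `O`. -/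
def trP {I O : Type} (T : Strat I O) (S : SysE I O) : ℕ → Sig I O → Bool :=
  fun n v =>
    match v with
    | Sum.inl i => (io T S obsO n).1 i
    | Sum.inr w => (io T S obsO n).2 w

/-- trace(T, S) for `S ∈ Mealy(I, O ∪ {o_i′})` and `T` observing all outputs. -/
def trE {I O : Type} (T : StratE I O) (S : SysE I O) : ℕ → Sig I O → Bool :=
  fun n v =>
    match v with
    | Sum.inl i => (io T S id n).1 i
    | Sum.inr w => (io T S id n).2 w

/-- `S ⊨r φ` for `S ∈ Mealy(I,O)`. -/
def RealizesF {I O : Type} (S : SysF I O) (φ : LTL (Sig I O)) : Prop :=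
  ∀ T : Strat I O, φ.Sat (trF T S)

/-- `S ⊨r φ` for `S ∈ Mealy(I, O ∪ {o_i′})`. -/
def RealizesE {I O : Type} (S : SysE I O) (φ : LTL (Sig I O)) : Prop :=
  ∀ T : StratE I O, φ.Sat (trE T S)

/-- The output signals `(O ∖ {o_i}) ∪ {o_i′}`. -/
abbrev RestSig (O : Type) (oi : O) : Type := {o : O // o ≠ oi} ⊕ Unit
/-- Systems `Mealy(I, (O ∖ {o_i}) ∪ {o_i′})`. -/
abbrev SysRest (I O : Type) (oi : O) : Type 1 := Mealy (I → Bool) (RestSig O oi → Bool)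
/-- Faults `Mealy(I ∪ (O ∖ {o_i}) ∪ {o_i′}, {o_i})`. -/
abbrev FaultM (I O : Type) (oi : O) : Type 1 := Mealy ((I ⊕ RestSig O oi) → Bool) Bool

/-- trace(T, S′) for `S′ ∈ Mealy(I, (O ∖ {o_i}) ∪ {o_i′})`, as a valuation of all signals
(the absent signal `o_i` is `false`). -/
def trRest {I O : Type} [DecidableEq O] (oi : O)
    (T : Moore (RestSig O oi → Bool) (I → Bool)) (S : SysRest I O oi) :
    ℕ → Sig I O → Bool :=
  fun n v =>
    match v with
    | Sum.inl i => (io T S id n).1 i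
    | Sum.inr (Sum.inl o) =>
        if h : o = oi then false else (io T S id n).2 (Sum.inl ⟨o, h⟩)
    | Sum.inr (Sum.inr _) => (io T S id n).2 (Sum.inr ())

/-- `S′ ⊨r φ` for `S′ ∈ Mealy(I, (O ∖ {o_i}) ∪ {o_i′})`. -/
def RealizesRest {I O : Type} [DecidableEq O] (oi : O) (S : SysRest I O oi)
    (φ : LTL (Sig I O)) : Prop :=
  ∀ T : Moore (RestSig O oi → Bool) (I → Bool), φ.Sat (trRest oi T S)

/-- trace(E, F) for a fault `F ∈ Mealy(I ∪ (O ∖ {o_i}) ∪ {o_i′}, {o_i})` run against an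
environment `E`, as a valuation of all signals. -/
def trFault {I O : Type} [DecidableEq O] (oi : O)
    (E : Moore Bool ((I ⊕ RestSig O oi) → Bool)) (F : FaultM I O oi) :
    ℕ → Sig I O → Bool :=
  fun n v =>
    match v with
    | Sum.inl i => (io E F id n).1 (Sum.inl i)
    | Sum.inr (Sum.inl o) =>
        if h : o = oi then (io E F id n).2
        else (io E F id n).1 (Sum.inr (Sum.inl ⟨o, h⟩))
    | Sum.inr (Sum.inr _) => (io E F id n).1 (Sum.inr (Sum.inr ()))

/-- `F ⊨r δ` for a fault `F ∈ Mealy(I ∪ (O ∖ {o_i}) ∪ {o_i′}, {o_i})`. -/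
def RealizesFault {I O : Type} [DecidableEq O] (oi : O) (F : FaultM I O oi)
    (δ : LTL (Sig I O)) : Prop :=
  ∀ E : Moore Bool ((I ⊕ RestSig O oi) → Bool), δ.Sat (trFault oi E F)

/-- The sequential composition `S′ ∘ F ∈ Mealy(I, O ∪ {o_i′})`. -/
def compSF {I O : Type} [DecidableEq O] (oi : O) (S' : SysRest I O oi)
    (F : FaultM I O oi) : SysE I O where
  State := S'.State × F.State
  finState := by haveI := S'.finState; haveI := F.finState; exact inferInstance
  init := (S'.init, F.init)
  trans := fun p x =>
    (S'.trans p.1 x,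
     F.trans p.2 (fun w =>
       match w with
       | Sum.inl i => x i
       | Sum.inr r => S'.out p.1 x r))
  out := fun p x w =>
    match w with
    | Sum.inl o =>
        if h : o = oi then
          F.out p.2 (fun z =>
            match z with
            | Sum.inl i => x i
            | Sum.inr r => S'.out p.1 x r)
        else S'.out p.1 x (Sum.inl ⟨o, h⟩)
    | Sum.inr _ => S'.out p.1 x (Sum.inr ())

/-- `φ[o_i ← o_i′]`: textual substitution of `o_i′` for all occurrences of `o_i`. -/
def substOut {I O : Type} [DecidableEq O] (oi : O) (φ : LTL (Sig I O)) : LTL (Sig I O) :=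
  φ.rename (fun v =>
    match v with
    | Sum.inl i => Sum.inl i
    | Sum.inr (Sum.inl o) => if o = oi then fresh I O else Sum.inr (Sum.inl o)
    | Sum.inr (Sum.inr u) => Sum.inr (Sum.inr u))

/-- A test suite `Ω ⊆ Moore(O, I)` is universally complete w.r.t. specification `φ`
and fault model `δ`. -/
def UnivComplete {I O : Type} [DecidableEq O] (φ δ : LTL (Sig I O))
    (Ω : Set (Strat I O)) : Prop :=
  ∀ oi : O, ∀ S' : SysRest I O oi, ∀ F : FaultM I O oi,
    ∃ T ∈ Ω,
      RealizesRest oi S' (substOut oi φ) → RealizesFault oi F δ →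
        ¬ φ.Sat (trP T (compSF oi S' F))

/-- Condition (★): for every output `o_i` there is a strategy `T ∈ Moore(O,I)` with
`trace(T,S) ⊨ ((φ[o_i←o_i′] ∧ δ) → ¬φ)` for all `S ∈ Mealy(I, O ∪ {o_i′})`. -/
def Star {I O : Type} [DecidableEq O] (φ δ : LTL (Sig I O)) : Prop :=
  ∀ oi : O, ∃ T : Strat I O, ∀ S : SysE I O,
    LTL.Sat (LTL.imp (LTL.conj (substOut oi φ) δ) (LTL.neg φ)) (trP T S)

/-- The four fault occurrence frequencies `F`, `GF`, `FG`, `G`. -/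
def freqs (V : Type) : Set (LTL V → LTL V) :=
  {LTL.ev, fun χ => LTL.alw (LTL.ev χ), fun χ => LTL.ev (LTL.alw χ), LTL.alw}


/-- The input signal `i` as an atomic proposition. -/
def ai : Sig Unit Unit := Sum.inl ()
/-- The output signal `o` as an atomic proposition. -/
def ao : Sig Unit Unit := Sum.inr (Sum.inl ())
/-- The fresh signal `o′` as an atomic proposition. -/
def ao' : Sig Unit Unit := fresh Unit Unit

/-- `φ = (G(i → G i) ∧ F i) → (G(o → G o) ∧ F o ∧ G(i ∨ ¬o))`. -/
def phiEx : LTL (Sig Unit Unit) :=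
  LTL.imp
    (LTL.conj (LTL.alw (LTL.imp (LTL.atom ai) (LTL.alw (LTL.atom ai))))
      (LTL.ev (LTL.atom ai)))
    (LTL.conj (LTL.alw (LTL.imp (LTL.atom ao) (LTL.alw (LTL.atom ao))))
      (LTL.conj (LTL.ev (LTL.atom ao))
        (LTL.alw (LTL.disj (LTL.atom ai) (LTL.neg (LTL.atom ao))))))

/-- `δ = F(o ↔ ¬o′)`. -/
def deltaEx : LTL (Sig Unit Unit) := LTL.ev (LTL.liff (LTL.atom ao) (LTL.neg (LTL.atom ao')))

/-- The two-state test strategy `T5`: it outputs `i = false` and stays in its initial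
state as long as it observes `o = false`; upon observing `o = true` it moves to (and
stays forever in) a state outputting `i = true`. -/
def T5 : Strat Unit Unit where
  State := Bool
  finState := inferInstance
  init := false
  trans := fun s y => s || y ()
  out := fun s _ => s

/-! ### Auxiliary material for the proof of `stmt13` -/

namespace LTL

theorem sat_neg {V : Type} (φ : LTL V) (σ : ℕ → V → Bool) :
    (LTL.neg φ).Sat σ ↔ ¬ φ.Sat σ := Iff.rfl

theorem sat_disj {V : Type} (φ ψ : LTL V) (σ : ℕ → V → Bool) :
    (LTL.disj φ ψ).Sat σ ↔ φ.Sat σ ∨ ψ.Sat σ := Iff.rfl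

theorem sat_atom {V : Type} (v : V) (σ : ℕ → V → Bool) :
    (LTL.atom v).Sat σ ↔ σ 0 v = true := Iff.rfl

theorem sat_conj {V : Type} (φ ψ : LTL V) (σ : ℕ → V → Bool) :
    (conj φ ψ).Sat σ ↔ φ.Sat σ ∧ ψ.Sat σ := by
  simp only [conj, Sat]; tauto

theorem sat_imp {V : Type} (φ ψ : LTL V) (σ : ℕ → V → Bool) :
    (imp φ ψ).Sat σ ↔ (φ.Sat σ → ψ.Sat σ) := by
  simp only [imp, Sat]; tauto

theorem sat_ev {V : Type} (φ : LTL V) (σ : ℕ → V → Bool) :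
    (ev φ).Sat σ ↔ ∃ j, φ.Sat (fun n => σ (n + j)) := by
  simp only [ev, Sat]
  constructor
  · rintro ⟨j, h, -⟩; exact ⟨j, h⟩
  · rintro ⟨j, h⟩; exact ⟨j, h, fun _ _ => trivial⟩

theorem sat_alw {V : Type} (φ : LTL V) (σ : ℕ → V → Bool) :
    (alw φ).Sat σ ↔ ∀ j, φ.Sat (fun n => σ (n + j)) := by
  rw [alw, sat_neg, sat_ev]
  simp only [Sat, not_exists, not_not]

end LTL

/-- `φ` with a generic output atom `b` in the place of `o`. -/
def phiGen (b : Sig Unit Unit) : LTL (Sig Unit Unit) :=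
  LTL.imp
    (LTL.conj (LTL.alw (LTL.imp (LTL.atom ai) (LTL.alw (LTL.atom ai))))
      (LTL.ev (LTL.atom ai)))
    (LTL.conj (LTL.alw (LTL.imp (LTL.atom b) (LTL.alw (LTL.atom b))))
      (LTL.conj (LTL.ev (LTL.atom b))
        (LTL.alw (LTL.disj (LTL.atom ai) (LTL.neg (LTL.atom b))))))

theorem phiEx_eq : phiEx = phiGen ao := rfl

theorem substOut_phiEx : substOut () phiEx = phiGen ao' := rfl

theorem sat_phiGen (b : Sig Unit Unit) (σ : ℕ → Sig Unit Unit → Bool) :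
    (phiGen b).Sat σ ↔
      (((∀ j, σ j ai = true → ∀ m, σ (m + j) ai = true) ∧ ∃ j, σ j ai = true) →
        ((∀ j, σ j b = true → ∀ m, σ (m + j) b = true) ∧ (∃ j, σ j b = true) ∧
          ∀ j, σ j ai = true ∨ σ j b = false)) := by
  simp only [phiGen, LTL.sat_imp, LTL.sat_conj, LTL.sat_alw, LTL.sat_ev, LTL.sat_disj,
    LTL.sat_neg, LTL.sat_atom, Nat.zero_add, Bool.not_eq_true]

theorem sat_deltaEx (σ : ℕ → Sig Unit Unit → Bool) :
    deltaEx.Sat σ ↔ ∃ j, (σ j ao = true → σ j ao' = false) ∧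
      (σ j ao' = false → σ j ao = true) := by
  simp only [deltaEx, LTL.liff, LTL.sat_ev, LTL.sat_conj, LTL.sat_imp, LTL.sat_neg,
    LTL.sat_atom, Nat.zero_add, Bool.not_eq_true]

section Example1

variable (S' : SysRest Unit Unit ()) (F : FaultM Unit Unit ())

/-- The state of `S'` after `n` steps of constant input `false`. -/
def s'c : ℕ → S'.State
  | 0 => S'.init
  | n + 1 => S'.trans (s'c n) (fun _ => false)

/-- The output `o′` of `S'` at step `n` on constant input `false`. -/
def o'c (n : ℕ) : Bool := S'.out (s'c S' n) (fun _ => false) (Sum.inr ())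

/-- Environment for the fault machine: plays `i = false` and `o′` as `S'` would on
constant input `false`. -/
def Emach : Moore Bool ((Unit ⊕ RestSig Unit ()) → Bool) where
  State := S'.State
  finState := S'.finState
  init := S'.init
  trans := fun s _ => S'.trans s (fun _ => false)
  out := fun s w =>
    match w with
    | Sum.inl _ => false
    | Sum.inr r => S'.out s (fun _ => false) r

/-- The state of `F` after `n` steps against `Emach`. -/
def fc : ℕ → F.State
  | 0 => F.init
  | n + 1 => F.trans (fc n) ((Emach S').out (s'c S' n))

/-- `o` produced by `F` against `Emach` at step `n`. -/
def oc (n : ℕ) : Bool := F.out (fc S' F n) ((Emach S').out (s'c S' n))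

theorem execE : ∀ n, exec (Emach S') F id n = (s'c S' n, fc S' F n)
  | 0 => rfl
  | n + 1 => by
    have h : exec (Emach S') F id (n + 1) =
        ((Emach S').trans (exec (Emach S') F id n).1
          (id (F.out (exec (Emach S') F id n).2 ((Emach S').out (exec (Emach S') F id n).1))),
         F.trans (exec (Emach S') F id n).2 ((Emach S').out (exec (Emach S') F id n).1)) := rfl
    rw [h, execE n]
    rfl

theorem trFault_ao (n : ℕ) : trFault () (Emach S') F n ao = oc S' F n := by
  show (io (Emach S') F id n).2 = _
  rw [io, execE]
  rfl

theorem trFault_ao' (n : ℕ) : trFault () (Emach S') F n ao' = o'c S' n := by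
  show (io (Emach S') F id n).1 (Sum.inr (Sum.inr ())) = _
  rw [io, execE]; rfl

/-- Test strategy against `S'`: mimic `T5`, but reading the fresh signal. -/
def Tmach : Moore (RestSig Unit () → Bool) (Unit → Bool) where
  State := Bool
  finState := inferInstance
  init := false
  trans := fun s y => s || y (Sum.inr ())
  out := fun s _ => s

theorem execT_succ (n : ℕ) :
    exec Tmach S' id (n + 1) =
      ((exec Tmach S' id n).1 ||
        S'.out (exec Tmach S' id n).2 (fun _ => (exec Tmach S' id n).1) (Sum.inr ()),
       S'.trans (exec Tmach S' id n).2 (fun _ => (exec Tmach S' id n).1)) := rfl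

theorem execT_le (k : ℕ) (hk : ∀ j, j < k → o'c S' j = false) :
    ∀ n, n ≤ k → exec Tmach S' id n = (false, s'c S' n) := by
  intro n
  induction n with
  | zero => intro _; rfl
  | succ n ih =>
    intro hn
    have h1 := ih (Nat.le_of_succ_le hn)
    rw [execT_succ, h1]
    have h2 : o'c S' n = false := hk n (Nat.lt_of_succ_le hn)
    show (false || S'.out (s'c S' n) (fun _ => false) (Sum.inr ()), _) = _
    rw [show S'.out (s'c S' n) (fun _ => false) (Sum.inr ()) = o'c S' n from rfl, h2]
    rfl

end Example1
section Example1

variable (S' : SysRest Unit Unit ()) (F : FaultM Unit Unit ())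

/-- The joint run of `T5` against `S' ∘ F`. -/
def pp (n : ℕ) : Bool × (S'.State × F.State) := exec T5 (compSF () S' F) obsO n

theorem trP_ai (n : ℕ) : trP T5 (compSF () S' F) n ai = (pp S' F n).1 := rfl

theorem pp_succ_fst (n : ℕ) :
    (pp S' F (n + 1)).1 = ((pp S' F n).1 || trP T5 (compSF () S' F) n ao) := rfl

theorem pp_mono (j : ℕ) (h : (pp S' F j).1 = true) :
    ∀ m, (pp S' F (m + j)).1 = true := by
  intro m
  induction m with
  | zero => simpa using h
  | succ m ih =>
    have : m + 1 + j = (m + j) + 1 := by omega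
    rw [this, pp_succ_fst, ih, Bool.true_or]

theorem runA (hA : ∀ n, trP T5 (compSF () S' F) n ao = false) :
    ∀ n, pp S' F n = (false, s'c S' n, fc S' F n) := by
  intro n
  induction n with
  | zero => rfl
  | succ n ih =>
    have hstep : pp S' F (n + 1) =
        ((pp S' F n).1 || trP T5 (compSF () S' F) n ao,
          (compSF () S' F).trans (pp S' F n).2 (T5.out (pp S' F n).1)) := rfl
    rw [hstep, hA n, ih]
    refine congrArg (Prod.mk false) ?_
    refine congrArg (Prod.mk (s'c S' (n + 1))) ?_
    refine congrArg (F.trans (fc S' F n)) ?_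
    funext w
    rcases w with i | r <;> rfl

theorem ocA_eq (n : ℕ) :
    (compSF () S' F).out (s'c S' n, fc S' F n) (fun _ : Unit => false) (Sum.inl ()) =
      oc S' F n := by
  show F.out (fc S' F n) _ = F.out (fc S' F n) ((Emach S').out (s'c S' n))
  refine congrArg (F.out (fc S' F n)) ?_
  funext w
  rcases w with i | r <;> rfl

theorem trP_ao_oc (hA : ∀ n, trP T5 (compSF () S' F) n ao = false) (n : ℕ) :
    oc S' F n = false := by
  have h := hA n
  have h2 : trP T5 (compSF () S' F) n ao =
      (compSF () S' F).out (pp S' F n).2 (T5.out (pp S' F n).1) (Sum.inl ()) := rfl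
  rw [h2, runA S' F hA n] at h
  exact (ocA_eq S' F n).symm.trans h

end Example1

theorem stmt13_key (S' : SysRest Unit Unit ()) (F : FaultM Unit Unit ())
    (hS : RealizesRest () S' (substOut () phiEx)) (hF : RealizesFault () F deltaEx) :
    ¬ phiEx.Sat (trP T5 (compSF () S' F)) := by
  by_cases hA : ∀ n, trP T5 (compSF () S' F) n ao = false
  · -- `o` is never raised: contradiction with the hypotheses
    exfalso
    -- from `F ⊨r δ`, eventually `o′` is raised on the constant-false run
    have hδ := hF (Emach S')
    rw [sat_deltaEx] at hδ
    obtain ⟨j, h1, h2⟩ := hδ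
    rw [trFault_ao, trFault_ao'] at h1 h2
    have hoj : oc S' F j = false := trP_ao_oc S' F hA j
    have hex : ∃ j, o'c S' j = true := by
      refine ⟨j, ?_⟩
      cases ho : o'c S' j with
      | false => rw [h2 ho] at hoj; exact absurd hoj (by simp)
      | true => rfl
    classical
    set k := Nat.find hex with hk
    have hkspec : o'c S' k = true := Nat.find_spec hex
    have hkmin : ∀ j, j < k → o'c S' j = false := by
      intro j hj
      have := Nat.find_min hex hj
      simpa using this
    -- run the strategy `Tmach` against `S'`
    have hρ := hS Tmach
    rw [substOut_phiEx, sat_phiGen] at hρ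
    have hq : ∀ n, n ≤ k → exec Tmach S' id n = (false, s'c S' n) :=
      execT_le S' k hkmin
    have hρ_ai : ∀ n, trRest () Tmach S' n ai = (exec Tmach S' id n).1 := fun _ => rfl
    have hρ_ao' : ∀ n, trRest () Tmach S' n ao' =
        S'.out (exec Tmach S' id n).2 (fun _ => (exec Tmach S' id n).1) (Sum.inr ()) :=
      fun _ => rfl
    have hq_succ_true : (exec Tmach S' id (k + 1)).1 = true := by
      rw [execT_succ, hq k le_rfl]
      show (false || S'.out (s'c S' k) (fun _ => false) (Sum.inr ())) = true
      rw [show S'.out (s'c S' k) (fun _ => false) (Sum.inr ()) = o'c S' k from rfl, hkspec]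
      rfl
    have hmono : ∀ j, trRest () Tmach S' j ai = true →
        ∀ m, trRest () Tmach S' (m + j) ai = true := by
      intro j hj m
      induction m with
      | zero => simpa using hj
      | succ m ih =>
        have hmj : m + 1 + j = (m + j) + 1 := by omega
        rw [hρ_ai] at ih ⊢
        rw [hmj, execT_succ, ih, Bool.true_or]
    have hcons := hρ ⟨hmono, ⟨k + 1, by rw [hρ_ai, hq_succ_true]⟩⟩
    obtain ⟨-, -, hG⟩ := hcons
    rcases hG k with h | h
    · rw [hρ_ai, (hq k le_rfl ▸ rfl : (exec Tmach S' id k).1 = false)] at h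
      exact absurd h (by simp)
    · rw [hρ_ao', hq k le_rfl] at h
      rw [show S'.out (s'c S' k) (fun _ => false) (Sum.inr ()) = o'c S' k from rfl] at h
      rw [hkspec] at h
      exact absurd h (by simp)
  · -- `o` is eventually raised: the trace violates `φ` directly
    push_neg at hA
    have hex : ∃ m, trP T5 (compSF () S' F) m ao = true := by
      obtain ⟨m, hm⟩ := hA
      exact ⟨m, by simpa using hm⟩
    classical
    set m := Nat.find hex with hm
    have hmspec : trP T5 (compSF () S' F) m ao = true := Nat.find_spec hex
    have hmmin : ∀ j, j < m → trP T5 (compSF () S' F) j ao = false := by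
      intro j hj
      have := Nat.find_min hex hj
      simpa using this
    have hlow : ∀ n, n ≤ m → (pp S' F n).1 = false := by
      intro n
      induction n with
      | zero => intro _; rfl
      | succ n ih =>
        intro hn
        rw [pp_succ_fst, ih (Nat.le_of_succ_le hn), hmmin n (Nat.lt_of_succ_le hn)]
        rfl
    have hhigh : (pp S' F (m + 1)).1 = true := by
      rw [pp_succ_fst, hlow m le_rfl, hmspec]
      rfl
    rw [phiEx_eq, sat_phiGen]
    intro hsat
    have hant : ((∀ j, trP T5 (compSF () S' F) j ai = true →
        ∀ m', trP T5 (compSF () S' F) (m' + j) ai = true) ∧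
        ∃ j, trP T5 (compSF () S' F) j ai = true) := by
      constructor
      · intro j hj m'
        rw [trP_ai] at hj ⊢
        exact pp_mono S' F j hj m'
      · exact ⟨m + 1, by rw [trP_ai, hhigh]⟩
    obtain ⟨-, -, hG⟩ := hsat hant
    rcases hG m with h | h
    · rw [trP_ai, hlow m le_rfl] at h
      exact absurd h (by simp)
    · rw [hmspec] at h
      exact absurd h (by simp)

/-- Example 1: the test suite `Ω = {T5}` is universally complete w.r.t.
`δ = F(o ↔ ¬o′)`: for every `S′ ∈ Mealy({i},{o′})` with `S′ ⊨r φ[o←o′]` and every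
`F ∈ Mealy({i,o′},{o})` with `F ⊨r δ`, we have `trace(T5, S′∘F) ⊭ φ`. -/
theorem stmt13 :
    UnivComplete phiEx deltaEx ({T5} : Set (Strat Unit Unit)) ∧
      (∀ S' : SysRest Unit Unit (), ∀ F : FaultM Unit Unit (),
        RealizesRest () S' (substOut () phiEx) → RealizesFault () F deltaEx →
          ¬ phiEx.Sat (trP T5 (compSF () S' F))) := by
  constructor
  · intro oi S' F
    cases oi
    exact ⟨T5, rfl, fun h1 h2 => stmt13_key S' F h1 h2⟩
  · exact fun S' F h1 h2 => stmt13_key S' F h1 h2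

end TestSynth
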